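/- arXiv:1608.08473 — 7 statements merged into one kernel-verified Lean document; each statement's English description precedes it below -/
import Mathlib

section
/- For every A > 0 there exist constants C > 0 and d₀ ∈ ℕ such that for all integers d ≥ d₀, all α ∈ [0, A], all x ∈ [0,1], and all s ≥ 0 with s·d ≤ 1, setting β = 1/d + α/d², one has |(e^{−β}(1 + β − s·x·β))^d − [1 − (1/2 + x·s·d)/d + (1/3 − α + x·s·d − α·x·s·d + (1/2)(1/2 + x·s·d)²)/d²]| ≤ C/d³. -/
/-!
Write `e = 1/d` and `t = x·s·d ∈ [0, 1]`. The base is `exp (-β) · (1 + z)` with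
`z = e + (α - t)e² - tαe³ = O(e)`, so its `d`-th power is `exp w` with `w = d·log (1 + z) - dβ`.
The third-order Taylor expansion of `log (1 + z)` gives `w = v + O(e³)` with
`v = -(1/2 + t)e + (1/3 - α + t - αt)e²`, and then `exp w = 1 + v + v²/2 + O(e³)`, which is the
stated quadratic in `e` up to `O(e³)`. All implied constants are polynomials in `1 + A`.
-/

open Real Set

lemma abs_log_one_add_sub_cubic_le {z : ℝ} (hz : |z| ≤ 1 / 2) :
    |log (1 + z) - (z - z ^ 2 / 2 + z ^ 3 / 3)| ≤ 2 * |z| ^ 4 := by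
  have h := abs_log_sub_add_sum_range_le (x := -z) (by rw [abs_neg]; linarith) 3
  norm_num [Finset.sum_range_succ] at h
  calc |log (1 + z) - (z - z ^ 2 / 2 + z ^ 3 / 3)| ≤ |z| ^ 4 / (1 - |z|) := by
        convert h using 2; ring
    _ ≤ 2 * |z| ^ 4 := by
        rw [div_le_iff₀ (by linarith)]; nlinarith [pow_nonneg (abs_nonneg z) 4]

lemma abs_exp_sub_quadratic_le {v : ℝ} (hv : |v| ≤ 1) :
    |exp v - (1 + v + v ^ 2 / 2)| ≤ |v| ^ 3 := by
  have h := Real.exp_bound hv (n := 3) (by norm_num)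
  norm_num [Finset.sum_range_succ, Nat.factorial] at h
  calc |exp v - (1 + v + v ^ 2 / 2)| ≤ |v| ^ 3 * (2 / 9) := by convert h using 2
    _ ≤ |v| ^ 3 := by nlinarith [pow_nonneg (abs_nonneg v) 3]

lemma abs_exp_sub_quadratic_le_of_abs_sub_le_one {v w : ℝ} (hv : |v| ≤ 1) (hwv : |w - v| ≤ 1) :
    |exp w - (1 + v + v ^ 2 / 2)| ≤ 6 * |w - v| + |v| ^ 3 := by
  have hexp : exp v ≤ 3 :=
    (exp_le_exp.mpr (abs_le.mp hv).2).trans (exp_one_lt_d9.le.trans (by norm_num))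
  calc |exp w - (1 + v + v ^ 2 / 2)|
      = |exp v * (exp (w - v) - 1) + (exp v - (1 + v + v ^ 2 / 2))| := by
        rw [mul_sub, ← exp_add, add_sub_cancel]; ring_nf
    _ ≤ exp v * |exp (w - v) - 1| + |v| ^ 3 := by
        grw [abs_add_le, abs_mul, abs_of_pos (exp_pos v), abs_exp_sub_quadratic_le hv]
    _ ≤ 3 * (2 * |w - v|) + |v| ^ 3 := by
        gcongr; exact abs_exp_sub_one_le hwv
    _ = 6 * |w - v| + |v| ^ 3 := by ring

lemma exp_neg_mul_pow {y : ℝ} (hy : 0 < y) (β : ℝ) (d : ℕ) :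
    (exp (-β) * y) ^ d = exp (d * (log y - β)) := by
  rw [mul_pow, ← exp_nat_mul, ← exp_log hy, ← exp_nat_mul, ← exp_add, log_exp]
  ring_nf

lemma abs_cubic_le {a A c₀ c₁ c₂ c₃ M₀ M₁ M₂ M₃ : ℝ} (ha : a ∈ Icc 0 A) (h₀ : |c₀| ≤ M₀)
    (h₁ : |c₁| ≤ M₁) (h₂ : |c₂| ≤ M₂) (h₃ : |c₃| ≤ M₃) :
    |c₀ + a * c₁ + a ^ 2 * c₂ + a ^ 3 * c₃| ≤ M₀ + A * M₁ + A ^ 2 * M₂ + A ^ 3 * M₃ := by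
  obtain ⟨ha0, haA⟩ := ha
  grw [abs_add_le, abs_add_le, abs_add_le]
  simp only [abs_mul, abs_pow, abs_of_nonneg ha0]
  have hA := ha0.trans haA
  gcongr

noncomputable section

/-- In the variables `e = 1/d`, `t = x·s·d`, one has `β = e + α e²` and
`1 + β - s·x·β = 1 + basePert α t e`. -/
def basePert (α t e : ℝ) : ℝ := e + (α - t) * e ^ 2 - t * α * e ^ 3

def exponentApprox (α t e : ℝ) : ℝ := -((1 / 2 + t) * e) + (1 / 3 - α + t - α * t) * e ^ 2

def exponentRemainder (α t e : ℝ) : ℝ :=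
  (-t - t ^ 2 / 2 + e * t ^ 2 - e ^ 2 * t ^ 3 / 3)
    + α * (1 + 2 * t - 3 * e * t - e * t ^ 2 + 3 * e ^ 2 * t ^ 2 - e ^ 3 * t ^ 3)
    + α ^ 2 * (-(1 / 2) + e + e * t - 3 * e ^ 2 * t - e ^ 2 * t ^ 2 / 2 + 3 * e ^ 3 * t ^ 2
        - e ^ 4 * t ^ 3)
    + α ^ 3 * (e ^ 2 / 3 - e ^ 3 * t + e ^ 4 * t ^ 2 - e ^ 5 * t ^ 3 / 3)

def powerApprox (α t e : ℝ) : ℝ :=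
  1 - (1 / 2 + t) * e + (1 / 3 - α + t - α * t + (1 / 2) * (1 / 2 + t) ^ 2) * e ^ 2

lemma cubic_basePert_div_sub_exponentApprox (α t : ℝ) {e : ℝ} (he : e ≠ 0) :
    (basePert α t e - basePert α t e ^ 2 / 2 + basePert α t e ^ 3 / 3) / e - (1 + α * e)
      - exponentApprox α t e = e ^ 3 * exponentRemainder α t e := by
  unfold basePert exponentApprox exponentRemainder
  field_simp
  ring

variable {A α t e : ℝ}

lemma abs_basePert_le (hα : α ∈ Icc 0 A) (ht : t ∈ Icc 0 1) (he : e ∈ Icc 0 1) :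
    |basePert α t e| ≤ 2 * (1 + A) * e := by
  obtain ⟨hα0, hαA⟩ := hα; obtain ⟨ht0, ht1⟩ := ht; obtain ⟨he0, he1⟩ := he
  have : t * α ≤ A := by nlinarith
  have : e ^ 3 ≤ e ^ 2 := pow_le_pow_of_le_one he0 he1 (by norm_num)
  have : e ^ 2 ≤ e := by nlinarith
  unfold basePert
  rw [abs_le]; constructor <;> nlinarith [mul_nonneg ht0 hα0, sq_nonneg e, pow_nonneg he0 3]

lemma abs_exponentApprox_le (hα : α ∈ Icc 0 A) (ht : t ∈ Icc 0 1) (he : e ∈ Icc 0 1) :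
    |exponentApprox α t e| ≤ 4 * (1 + A) * e := by
  obtain ⟨hα0, hαA⟩ := hα; obtain ⟨ht0, ht1⟩ := ht; obtain ⟨he0, he1⟩ := he
  have : α * t ≤ A := by nlinarith
  have : e ^ 2 ≤ e := by nlinarith
  unfold exponentApprox
  rw [abs_le]; constructor <;> nlinarith [mul_nonneg hα0 ht0, sq_nonneg e]


lemma abs_exponentRemainder_le (hα : α ∈ Icc 0 A) (ht : t ∈ Icc 0 1) (he : e ∈ Icc 0 1) :
    |exponentRemainder α t e| ≤ 11 * (1 + A) ^ 3 := by
  have hA : 0 ≤ A := hα.1.trans hα.2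
  have key : ∀ i k : ℕ, 0 ≤ e ^ i * t ^ k ∧ e ^ i * t ^ k ≤ 1 := fun i k =>
    ⟨mul_nonneg (pow_nonneg he.1 i) (pow_nonneg ht.1 k),
      mul_le_one₀ (pow_le_one₀ he.1 he.2) (pow_nonneg ht.1 k) (pow_le_one₀ ht.1 ht.2)⟩
  refine (abs_cubic_le hα (M₀ := 3) (M₁ := 11) (M₂ := 10) (M₃ := 3) ?_ ?_ ?_ ?_).trans
    (by nlinarith [pow_nonneg hA 3, pow_nonneg hA 2])
  all_goals
    rw [abs_le]; constructor <;>
    linarith [key 0 1, key 0 2, key 1 0, key 1 1, key 1 2, key 2 0, key 2 1, key 2 2, key 2 3,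
      key 3 1, key 3 2, key 3 3, key 4 2, key 4 3, key 5 3]

lemma abs_quadratic_exponentApprox_sub_powerApprox_le (hα : α ∈ Icc 0 A) (ht : t ∈ Icc 0 1)
    (he : e ∈ Icc 0 1) :
    |1 + exponentApprox α t e + exponentApprox α t e ^ 2 / 2 - powerApprox α t e|
      ≤ 5 * (1 + A) ^ 2 * e ^ 3 := by
  obtain ⟨hα0, hαA⟩ := hα; obtain ⟨ht0, ht1⟩ := ht; obtain ⟨he0, he1⟩ := he
  have hc : |1 / 3 - α + t - α * t| ≤ 2 * (1 + A) := by
    have : α * t ≤ A := by nlinarith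
    rw [abs_le]; constructor <;> nlinarith [mul_nonneg hα0 ht0]
  set c := 1 / 3 - α + t - α * t
  have hid : 1 + exponentApprox α t e + exponentApprox α t e ^ 2 / 2 - powerApprox α t e
      = e ^ 3 * (-(1 / 2 + t) * c + c ^ 2 * e / 2) := by
    unfold exponentApprox powerApprox; ring
  rw [hid, abs_mul, abs_of_nonneg (pow_nonneg he0 3), mul_comm]
  gcongr
  have hc2 : c ^ 2 ≤ (2 * (1 + A)) ^ 2 := sq_le_sq' (abs_le.mp hc).1 (abs_le.mp hc).2
  rw [abs_le]; constructor <;> nlinarith [abs_le.mp hc, sq_nonneg c, mul_nonneg (sq_nonneg c) he0]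



lemma abs_exponent_sub_exponentApprox_le (hα : α ∈ Icc 0 A) (ht : t ∈ Icc 0 1) (he0 : 0 < e)
    (he : 4 * (1 + A) * e ≤ 1) :
    |log (1 + basePert α t e) / e - (1 + α * e) - exponentApprox α t e|
      ≤ 43 * (1 + A) ^ 4 * e ^ 3 := by
  have hB : 1 ≤ 1 + A := by linarith [hα.1.trans hα.2]
  have heI : e ∈ Icc 0 1 := ⟨he0.le, by nlinarith⟩
  set z := basePert α t e
  have hz : |z| ≤ 2 * (1 + A) * e := abs_basePert_le hα ht heI
  have hsplit : log (1 + z) / e - (1 + α * e) - exponentApprox α t e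
      = (log (1 + z) - (z - z ^ 2 / 2 + z ^ 3 / 3)) / e + e ^ 3 * exponentRemainder α t e := by
    rw [← cubic_basePert_div_sub_exponentApprox α t he0.ne']; ring
  calc |log (1 + z) / e - (1 + α * e) - exponentApprox α t e|
      ≤ |log (1 + z) - (z - z ^ 2 / 2 + z ^ 3 / 3)| / e + e ^ 3 * |exponentRemainder α t e| := by
        rw [hsplit]
        grw [abs_add_le, abs_div, abs_mul, abs_of_pos he0, abs_of_nonneg (pow_nonneg he0.le 3)]
    _ ≤ 2 * (2 * (1 + A) * e) ^ 4 / e + e ^ 3 * (11 * (1 + A) ^ 3) := by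
        grw [abs_log_one_add_sub_cubic_le (hz.trans (by linarith)), hz,
          abs_exponentRemainder_le hα ht heI]
    _ = (32 * (1 + A) ^ 4 + 11 * (1 + A) ^ 3) * e ^ 3 := by field_simp; ring
    _ ≤ 43 * (1 + A) ^ 4 * e ^ 3 := by
        grw [pow_le_pow_right₀ hB (show 3 ≤ 4 by norm_num)]; linarith

lemma abs_pow_sub_powerApprox_le {d : ℕ} (hα : α ∈ Icc 0 A) (ht : t ∈ Icc 0 1) (he0 : 0 < e)
    (hde : (d : ℝ) * e = 1) (he : 64 * (1 + A) ^ 4 * e ≤ 1) :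
    |(exp (-(e + α * e ^ 2)) * (1 + basePert α t e)) ^ d - powerApprox α t e|
      ≤ 330 * (1 + A) ^ 4 * e ^ 3 := by
  have hB : 1 ≤ 1 + A := by linarith [hα.1.trans hα.2]
  have hB4 : 1 + A ≤ (1 + A) ^ 4 := le_self_pow₀ hB (by norm_num)
  have he1 : e ≤ 1 := by nlinarith
  have he' : 4 * (1 + A) * e ≤ 1 := by nlinarith
  have hz : |basePert α t e| ≤ 1 / 2 :=
    (abs_basePert_le hα ht ⟨he0.le, he1⟩).trans (by linarith)
  have hexponent : (d : ℝ) * (log (1 + basePert α t e) - (e + α * e ^ 2))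
      = log (1 + basePert α t e) / e - (1 + α * e) := by
    rw [eq_inv_of_mul_eq_one_left hde]; field_simp
  rw [exp_neg_mul_pow (by linarith [(abs_le.mp hz).1]), hexponent]
  set w := log (1 + basePert α t e) / e - (1 + α * e)
  set v := exponentApprox α t e
  have hwv : |w - v| ≤ 43 * (1 + A) ^ 4 * e ^ 3 := abs_exponent_sub_exponentApprox_le hα ht he0 he'
  have hv : |v| ≤ 4 * (1 + A) * e := abs_exponentApprox_le hα ht ⟨he0.le, he1⟩
  have hwv1 : |w - v| ≤ 1 :=
    hwv.trans (by nlinarith [pow_le_pow_of_le_one he0.le he1 (show 1 ≤ 3 by norm_num)])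
  calc |exp w - powerApprox α t e|
      ≤ |exp w - (1 + v + v ^ 2 / 2)| + |1 + v + v ^ 2 / 2 - powerApprox α t e| :=
        abs_sub_le _ _ _
    _ ≤ 6 * |w - v| + |v| ^ 3 + 5 * (1 + A) ^ 2 * e ^ 3 := by
        grw [abs_exp_sub_quadratic_le_of_abs_sub_le_one (hv.trans he') hwv1,
          abs_quadratic_exponentApprox_sub_powerApprox_le hα ht ⟨he0.le, he1⟩]
    _ ≤ 6 * (43 * (1 + A) ^ 4 * e ^ 3) + (4 * (1 + A) * e) ^ 3 + 5 * (1 + A) ^ 2 * e ^ 3 := by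
        grw [hwv, hv]
    _ ≤ 330 * (1 + A) ^ 4 * e ^ 3 := by
        have h3 : (1 + A) ^ 3 * e ^ 3 ≤ (1 + A) ^ 4 * e ^ 3 :=
          mul_le_mul_of_nonneg_right (pow_le_pow_right₀ hB (by norm_num)) (by positivity)
        have h2 : (1 + A) ^ 2 * e ^ 3 ≤ (1 + A) ^ 4 * e ^ 3 :=
          mul_le_mul_of_nonneg_right (pow_le_pow_right₀ hB (by norm_num)) (by positivity)
        have h4 : 0 ≤ (1 + A) ^ 4 * e ^ 3 := by positivity
        linarith [show (4 * (1 + A) * e) ^ 3 = 64 * ((1 + A) ^ 3 * e ^ 3) by ring]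

end

/-- For every `A > 0` there exist `C > 0` and `d₀ ∈ ℕ` such that for all
integers `d ≥ d₀`, all `α ∈ [0, A]`, all `x ∈ [0,1]`, and all `s ≥ 0` with `s·d ≤ 1`,
setting `β = 1/d + α/d²`, one has
`|(e^{−β}(1 + β − s·x·β))^d − [1 − (1/2 + x·s·d)/d
    + (1/3 − α + x·s·d − α·x·s·d + (1/2)(1/2 + x·s·d)²)/d²]| ≤ C/d³`. -/
theorem exp_one_expansion (A : ℝ) (hA : 0 < A) :
    ∃ C : ℝ, 0 < C ∧ ∃ d₀ : ℕ, ∀ d : ℕ, d₀ ≤ d → ∀ α ∈ Set.Icc (0 : ℝ) A,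
      ∀ x ∈ Set.Icc (0 : ℝ) 1, ∀ s : ℝ, 0 ≤ s → s * (d : ℝ) ≤ 1 →
        ∀ β : ℝ, β = 1 / (d : ℝ) + α / (d : ℝ) ^ 2 →
          |(Real.exp (-β) * (1 + β - s * x * β)) ^ d -
              (1 - (1 / 2 + x * s * (d : ℝ)) / (d : ℝ)
                + (1 / 3 - α + x * s * (d : ℝ) - α * (x * s * (d : ℝ))
                    + (1 / 2) * (1 / 2 + x * s * (d : ℝ)) ^ 2) / (d : ℝ) ^ 2)|
            ≤ C / (d : ℝ) ^ 3 := by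
  refine ⟨330 * (1 + A) ^ 4, by positivity, ⌈64 * (1 + A) ^ 4⌉₊, ?_⟩
  rintro d hd α hα x ⟨hx0, hx1⟩ s hs hsd β rfl
  have hd : 64 * (1 + A) ^ 4 ≤ (d : ℝ) := Nat.ceil_le.mp hd
  have hd0 : (0 : ℝ) < d := lt_of_lt_of_le (by positivity) hd
  have ht : x * s * d ∈ Icc (0 : ℝ) 1 :=
    ⟨by positivity, by rw [mul_assoc]; exact mul_le_one₀ hx1 (by positivity) hsd⟩
  have hbase : 1 + (1 / d + α / d ^ 2) - s * x * (1 / d + α / d ^ 2)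
      = 1 + basePert α (x * s * d) (d : ℝ)⁻¹ := by
    unfold basePert; field_simp; ring
  have htarget : 1 - (1 / 2 + x * s * d) / d + (1 / 3 - α + x * s * d - α * (x * s * d)
      + (1 / 2) * (1 / 2 + x * s * d) ^ 2) / d ^ 2 = powerApprox α (x * s * d) (d : ℝ)⁻¹ := by
    unfold powerApprox; field_simp
  have hβ : 1 / (d : ℝ) + α / d ^ 2 = (d : ℝ)⁻¹ + α * (d : ℝ)⁻¹ ^ 2 := by field_simp
  rw [hbase, htarget, hβ]
  calc _ ≤ 330 * (1 + A) ^ 4 * (d : ℝ)⁻¹ ^ 3 :=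
        abs_pow_sub_powerApprox_le hα ht (by positivity) (mul_inv_cancel₀ hd0.ne')
          (by rw [← div_eq_mul_inv, div_le_one hd0]; exact hd)
    _ = 330 * (1 + A) ^ 4 / d ^ 3 := by field_simp
end

section
/- For every A > 0 there exist constants C > 0 and d₀ ∈ ℕ such that for all integers d ≥ d₀ and all α ∈ [0, A], setting β = 1/d + α/d², one has |(e^{−β}(1+β))^d − (1 − 1/(2d))| ≤ C/d². -/
/-!
Writing `(e^{-β}(1+β))^d = exp (d (log (1+β) - β))` and expanding `log (1+β)` to second order,
the exponent is `-d β²/2 + O(1/d²)`. For `β = 1/d + α/d²` one has exactly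
`d β²/2 = 1/(2d) + α/d² + α²/(2d³)`, so the exponent is `-1/(2d) + δ` with `|δ| = O(1/d²)`,
and `exp (-t + δ) = 1 - t + O(t² + |δ|)` with `t = 1/(2d)`.
-/

open Real

theorem abs_log_one_add_sub_le {x : ℝ} (hx : |x| ≤ 1 / 2) :
    |log (1 + x) - (x - x ^ 2 / 2)| ≤ 2 * |x| ^ 3 := by
  have h := abs_log_sub_add_sum_range_le (x := -x) (by rw [abs_neg]; linarith) 2
  simp only [Finset.sum_range_succ, Finset.sum_range_zero, abs_neg, sub_neg_eq_add] at h
  have hx₀ := abs_nonneg x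
  calc |log (1 + x) - (x - x ^ 2 / 2)| ≤ |x| ^ 3 / (1 - |x|) := by
        convert h using 2; ring
    _ ≤ 2 * |x| ^ 3 := by
        rw [div_le_iff₀ (by linarith)]
        nlinarith [pow_nonneg hx₀ 3]

theorem exp_neg_mul_one_add_pow {β : ℝ} (hβ : -1 < β) (d : ℕ) :
    (exp (-β) * (1 + β)) ^ d = exp (d * (log (1 + β) - β)) := by
  rw [exp_nat_mul, exp_sub, exp_log (by linarith), exp_neg]
  ring

theorem abs_exp_neg_add_sub_one_sub_le {t δ : ℝ} (ht₀ : 0 ≤ t) (ht₁ : t ≤ 1) (hδ : |δ| ≤ 1) :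
    |exp (-t + δ) - (1 - t)| ≤ 2 * |δ| + t ^ 2 := by
  have hexp_t : exp (-t) ≤ 1 := exp_le_one_iff.mpr (by linarith)
  have hδ' := abs_exp_sub_one_le hδ
  have ht' := abs_exp_sub_one_sub_id_le (x := -t) (by rw [abs_neg, abs_of_nonneg ht₀]; exact ht₁)
  calc |exp (-t + δ) - (1 - t)|
      = |exp (-t) * (exp δ - 1) + (exp (-t) - 1 - -t)| := by rw [exp_add]; congr 1; ring
    _ ≤ exp (-t) * |exp δ - 1| + |exp (-t) - 1 - -t| :=
        (abs_add_le _ _).trans_eq (by rw [abs_mul, abs_of_pos (exp_pos _)])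
    _ ≤ 1 * (2 * |δ|) + (-t) ^ 2 := by gcongr
    _ = 2 * |δ| + t ^ 2 := by ring

theorem abs_mul_log_one_add_sub_add_le {A α d : ℝ} (hα₀ : 0 ≤ α) (hαA : α ≤ A) (hAd : A ≤ d)
    (hd : 4 ≤ d) :
    |d * (log (1 + (1 / d + α / d ^ 2)) - (1 / d + α / d ^ 2)) + 1 / (2 * d)|
      ≤ (16 + 2 * A) / d ^ 2 := by
  set β := 1 / d + α / d ^ 2 with hβ
  have hd₀ : 0 < d := by linarith
  have hβ₀ : 0 ≤ β := by positivity
  have hβ_le : β ≤ 2 / d := by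
    have : α / d ^ 2 ≤ 1 / d := by
      rw [div_le_div_iff₀ (by positivity) hd₀]; nlinarith
    linarith [show 2 / d = 1 / d + 1 / d by ring]
  have hβ_half : |β| ≤ 1 / 2 := by
    rw [abs_of_nonneg hβ₀]
    exact hβ_le.trans (by rw [div_le_div_iff₀ hd₀ two_pos]; linarith)
  have hsplit : d * (log (1 + β) - β) + 1 / (2 * d)
      = d * (log (1 + β) - (β - β ^ 2 / 2)) - (α / d ^ 2 + α ^ 2 / (2 * d ^ 3)) := by
    rw [hβ]; field_simp; ring
  have hcubic : |d * (log (1 + β) - (β - β ^ 2 / 2))| ≤ 16 / d ^ 2 :=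
    calc |d * (log (1 + β) - (β - β ^ 2 / 2))| ≤ d * (2 * β ^ 3) := by
          have hlog := abs_log_one_add_sub_le hβ_half
          rw [abs_of_nonneg hβ₀] at hlog
          rw [abs_mul, abs_of_pos hd₀]
          exact mul_le_mul_of_nonneg_left hlog hd₀.le
      _ ≤ d * (2 * (2 / d) ^ 3) := by gcongr
      _ = 16 / d ^ 2 := by field_simp; ring
  have hquad : α / d ^ 2 + α ^ 2 / (2 * d ^ 3) ≤ 2 * A / d ^ 2 := by
    have : α ^ 2 / (2 * d ^ 3) ≤ α / d ^ 2 := by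
      rw [div_le_div_iff₀ (by positivity) (by positivity)]
      nlinarith [mul_nonneg (mul_nonneg hα₀ (sq_nonneg d)) (by linarith : 0 ≤ 2 * d - α)]
    calc α / d ^ 2 + α ^ 2 / (2 * d ^ 3) ≤ 2 * α / d ^ 2 := by linarith [mul_div_assoc 2 α (d ^ 2)]
      _ ≤ 2 * A / d ^ 2 := by gcongr
  rw [hsplit]
  calc _ ≤ |d * (log (1 + β) - (β - β ^ 2 / 2))| + |α / d ^ 2 + α ^ 2 / (2 * d ^ 3)| :=
        abs_sub _ _
    _ ≤ 16 / d ^ 2 + 2 * A / d ^ 2 := by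
        rw [abs_of_nonneg (by positivity : 0 ≤ α / d ^ 2 + α ^ 2 / (2 * d ^ 3))]
        exact add_le_add hcubic hquad
    _ = (16 + 2 * A) / d ^ 2 := by ring

/-- For every `A > 0` there exist `C > 0` and `d₀ ∈ ℕ` such that for all
integers `d ≥ d₀` and all `α ∈ [0, A]`, setting `β = 1/d + α/d²`, one has
`|(e^{−β}(1+β))^d − (1 − 1/(2d))| ≤ C/d²`. -/
theorem prob_A1_expansion (A : ℝ) (hA : 0 < A) :
    ∃ C : ℝ, 0 < C ∧ ∃ d₀ : ℕ, ∀ d : ℕ, d₀ ≤ d → ∀ α ∈ Set.Icc (0 : ℝ) A,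
      ∀ β : ℝ, β = 1 / (d : ℝ) + α / (d : ℝ) ^ 2 →
        |(Real.exp (-β) * (1 + β)) ^ d - (1 - 1 / (2 * (d : ℝ)))| ≤ C / (d : ℝ) ^ 2 := by
  refine ⟨33 + 4 * A, by positivity, ⌈16 + 2 * A⌉₊, fun d hd α ⟨hα₀, hαA⟩ β hβ => ?_⟩
  have hdA : 16 + 2 * A ≤ (d : ℝ) := Nat.ceil_le.mp hd
  have hd₀ : (0 : ℝ) < d := by linarith
  have hβ₀ : 0 ≤ β := by rw [hβ]; positivity
  set δ := d * (log (1 + β) - β) + 1 / (2 * d)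
  have hδ : |δ| ≤ (16 + 2 * A) / d ^ 2 := by
    subst hβ; exact abs_mul_log_one_add_sub_add_le hα₀ hαA (by linarith) (by linarith)
  have hδ₁ : |δ| ≤ 1 := hδ.trans <| by rw [div_le_one (by positivity)]; nlinarith
  have ht₁ : 1 / (2 * d) ≤ (1 : ℝ) := by rw [div_le_one (by positivity)]; linarith
  rw [exp_neg_mul_one_add_pow (by linarith) d,
    show d * (log (1 + β) - β) = -(1 / (2 * d)) + δ by ring]
  calc _ ≤ 2 * |δ| + (1 / (2 * d)) ^ 2 :=
        abs_exp_neg_add_sub_one_sub_le (by positivity) ht₁ hδ₁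
    _ ≤ 2 * ((16 + 2 * A) / d ^ 2) + 1 / d ^ 2 := by
        gcongr
        rw [div_pow, one_pow, mul_pow]
        gcongr
        exact le_mul_of_one_le_left (sq_nonneg _) (by norm_num)
    _ = (33 + 4 * A) / d ^ 2 := by ring
end

section
/- For every A > 0 there exist constants C > 0 and d₀ ∈ ℕ such that for all integers d ≥ d₀ and all α ∈ [0, A], setting β = 1/d + α/d², one has |d·p_{≥2}(β) − d·p₂(β)·(1 − p_{≥2}(β))^{d−1} − (5/12)/d²| ≤ C/d³. -/
/-!
Write `T = p_{≥2}(β) = 1 - e^{-β}(1 + β)` and `P = p₂(β)`. Then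
`d T - d P (1 - T)^{d-1} = d (T - P) + d P (1 - (1 - T)^{d-1})`, where `T - P = p_{≥3}(β)
= β³/6 + O(β⁴)`, both `P` and `T` are `β²/2 + O(β³)`, and Bernoulli's inequality and its
second-order converse give `1 - (1 - T)^{d-1} = (d - 1) T + O((d T)²)`. With `β ≍ 1/d` the
expression is therefore `d β³/6 + d (d - 1) β⁴/4 + O(d⁻³)`, and since `s = d β = 1 + α/d`
this is `(s³/6 + s⁴/4)/d² + O(d⁻³) = (5/12)/d² + O(d⁻³)`.
-/

/-- The Poisson(β) probability mass function `p_j(β) = e^{−β} β^j / j!`. -/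
noncomputable def poissonProb (β : ℝ) (j : ℕ) : ℝ :=
  Real.exp (-β) * β ^ j / (Nat.factorial j)

/-- The Poisson(β) tail probability `p_{≥k}(β) = Σ_{j≥k} e^{−β} β^j / j!`. -/
noncomputable def poissonTail (β : ℝ) (k : ℕ) : ℝ :=
  ∑' j : ℕ, if k ≤ j then poissonProb β j else 0

open Real Finset

lemma hasSum_poissonProb (β : ℝ) : HasSum (poissonProb β) 1 := by
  have h := (NormedSpace.expSeries_div_hasSum_exp β).mul_left (exp (-β))
  rw [← congrFun exp_eq_exp_ℝ, ← exp_add, neg_add_cancel, exp_zero] at h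
  exact h.congr_fun fun j => mul_div_assoc _ _ _

lemma poissonTail_eq_one_sub_sum (β : ℝ) (k : ℕ) :
    poissonTail β k = 1 - ∑ j ∈ range k, poissonProb β j := by
  refine HasSum.tsum_eq ((hasSum_nat_add_iff' k).mp ?_)
  have hhead : ∑ j ∈ range k, (if k ≤ j then poissonProb β j else 0) = 0 :=
    sum_eq_zero fun j hj => if_neg (by simpa using hj)
  simpa [hhead] using (hasSum_nat_add_iff' k).mpr (hasSum_poissonProb β)

lemma poissonTail_succ (β : ℝ) (k : ℕ) :
    poissonTail β (k + 1) = poissonTail β k - poissonProb β k := by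
  rw [poissonTail_eq_one_sub_sum, poissonTail_eq_one_sub_sum, sum_range_succ]
  ring

lemma poissonTail_nonneg {β : ℝ} (hβ : 0 ≤ β) (k : ℕ) : 0 ≤ poissonTail β k :=
  tsum_nonneg fun j => by unfold poissonProb; positivity

lemma poissonTail_two (β : ℝ) : poissonTail β 2 = 1 - exp (-β) * (1 + β) := by
  simp [poissonTail_eq_one_sub_sum, sum_range_succ, poissonProb, mul_add]

lemma poissonTail_three (β : ℝ) :
    poissonTail β 3 = 1 - exp (-β) * (1 + β + β ^ 2 / 2) := by
  simp [poissonTail_eq_one_sub_sum, sum_range_succ, poissonProb, mul_add, mul_div_assoc]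

lemma poissonProb_two (β : ℝ) : poissonProb β 2 = exp (-β) * β ^ 2 / 2 := by
  norm_num [poissonProb]

lemma abs_exp_neg_sub_taylor_le {x : ℝ} (h0 : 0 ≤ x) (h1 : x ≤ 1) :
    |exp (-x) - (1 - x + x ^ 2 / 2 - x ^ 3 / 6)| ≤ x ^ 4 * (5 / 96) := by
  have htaylor : ∑ m ∈ range 4, (-x) ^ m / (m.factorial : ℝ) = 1 - x + x ^ 2 / 2 - x ^ 3 / 6 := by
    simp only [sum_range_succ, range_zero, sum_empty, Nat.factorial]
    push_cast
    ring
  have h := exp_bound (x := -x) (by rwa [abs_neg, abs_of_nonneg h0]) (n := 4) (by norm_num)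
  rw [htaylor, abs_neg, abs_of_nonneg h0] at h
  convert h using 2
  norm_num [Nat.factorial]

lemma le_poissonProb_two (β : ℝ) : β ^ 2 / 2 - β ^ 3 / 2 ≤ poissonProb β 2 := by
  rw [poissonProb_two]
  nlinarith [one_sub_le_exp_neg β, sq_nonneg β]

lemma poissonTail_two_le {β : ℝ} (hβ0 : 0 ≤ β) (hβ1 : β ≤ 1) :
    poissonTail β 2 ≤ β ^ 2 / 2 := by
  rw [poissonTail_two]
  have h := (abs_le.mp (abs_exp_neg_sub_taylor_le hβ0 hβ1)).1
  nlinarith [pow_nonneg hβ0 3, pow_nonneg hβ0 4]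

lemma abs_poissonTail_three_sub_le {β : ℝ} (hβ0 : 0 ≤ β) (hβ1 : β ≤ 1) :
    |poissonTail β 3 - β ^ 3 / 6| ≤ β ^ 4 / 4 := by
  rw [poissonTail_three]
  obtain ⟨hlo, hhi⟩ := abs_le.mp (abs_exp_neg_sub_taylor_le hβ0 hβ1)
  rw [abs_le]
  constructor <;> nlinarith [pow_nonneg hβ0 3, pow_nonneg hβ0 4, pow_nonneg hβ0 5, pow_nonneg hβ0 6]

lemma one_sub_pow_le_one_sub_mul_add_sq_div_two {t : ℝ} (ht0 : 0 ≤ t) (ht1 : t ≤ 1) (n : ℕ) :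
    (1 - t) ^ n ≤ 1 - n * t + (n * t) ^ 2 / 2 := by
  induction n with
  | zero => simp
  | succ n ih =>
    push_cast
    rw [pow_succ]
    nlinarith [mul_le_mul_of_nonneg_right ih (sub_nonneg.mpr ht1),
      mul_nonneg (n.cast_nonneg : (0 : ℝ) ≤ n) (sq_nonneg t), mul_nonneg (sq_nonneg (n * t : ℝ)) ht0]

lemma abs_leading_terms_sub_le {D β A : ℝ} (hD : 0 < D) (hs1 : 1 ≤ D * β) (hs2 : D * β ≤ 2)
    (hsA : D * (D * β - 1) ≤ A) :
    |D ^ 4 * β ^ 3 / 6 + D ^ 4 * (D - 1) * β ^ 4 / 4 - 5 * D / 12| ≤ 5 * A + 4 := by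
  set s := D * β with hs
  have hpoly : D ^ 4 * β ^ 3 / 6 + D ^ 4 * (D - 1) * β ^ 4 / 4 - 5 * D / 12
      = D * (s ^ 3 / 6 + s ^ 4 / 4 - 5 / 12) - s ^ 4 / 4 := by
    rw [hs]; ring
  have hfac : s ^ 3 / 6 + s ^ 4 / 4 - 5 / 12
      = (s - 1) * ((s ^ 2 + s + 1) / 6 + (s ^ 3 + s ^ 2 + s + 1) / 4) := by ring
  have hlo : 0 ≤ s ^ 3 / 6 + s ^ 4 / 4 - 5 / 12 := by
    rw [hfac]; exact mul_nonneg (by linarith) (by positivity)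
  have hhi : s ^ 3 / 6 + s ^ 4 / 4 - 5 / 12 ≤ 5 * (s - 1) := by
    rw [hfac, mul_comm 5]
    refine mul_le_mul_of_nonneg_left ?_ (by linarith)
    nlinarith
  have hs4 : s ^ 4 ≤ 16 := by
    calc s ^ 4 ≤ 2 ^ 4 := pow_le_pow_left₀ (by linarith) hs2 4
    _ = 16 := by norm_num
  rw [hpoly, abs_le]
  constructor <;> nlinarith [mul_le_mul_of_nonneg_left hhi hD.le, mul_nonneg hD.le hlo]

lemma abs_sub_five_div_twelve_le_of_taylor_bounds {d : ℕ} {A β P T : ℝ} (hd : 2 ≤ d)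
    (hs1 : 1 ≤ d * β) (hs2 : d * β ≤ 2) (hsA : d * (d * β - 1) ≤ A)
    (hP : β ^ 2 / 2 - β ^ 3 / 2 ≤ P) (hPT : 0 ≤ T - P) (hT : T ≤ β ^ 2 / 2)
    (hTP : |T - P - β ^ 3 / 6| ≤ β ^ 4 / 4) :
    |d * T - d * P * (1 - T) ^ (d - 1) - 5 / 12 / d ^ 2| ≤ (5 * A + 28) / d ^ 3 := by
  set D : ℝ := (d : ℝ) with hDdef
  set N : ℝ := ((d - 1 : ℕ) : ℝ) with hN
  have hD : (2 : ℝ) ≤ D := by rw [hDdef]; exact_mod_cast hd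
  have hND : N = D - 1 := by rw [hN, hDdef, Nat.cast_sub (by omega), Nat.cast_one]
  have hβ0 : 0 ≤ β := by nlinarith
  have hβ1 : β ≤ 1 := by nlinarith
  have hP0 : 0 ≤ P := by nlinarith [pow_nonneg hβ0 3]
  have hT1 : T ≤ 1 := by nlinarith
  have hs_pow (k : ℕ) : (D * β) ^ k ≤ 2 ^ k := pow_le_pow_left₀ (by positivity) hs2 k
  obtain ⟨hUlo, hUhi⟩ : 1 - N * T ≤ (1 - T) ^ (d - 1) ∧
      (1 - T) ^ (d - 1) ≤ 1 - N * T + (N * T) ^ 2 / 2 :=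
    ⟨by simpa [sub_eq_add_neg] using one_add_mul_le_pow (a := -T) (by linarith) (d - 1),
      one_sub_pow_le_one_sub_mul_add_sq_div_two (by linarith) hT1 (d - 1)⟩
  have hNT : N * T ≤ D * β ^ 2 / 2 := by nlinarith
  have h1 : |D ^ 4 * (T - P - β ^ 3 / 6)| ≤ 4 := by
    rw [abs_mul, abs_of_nonneg (by positivity)]
    calc D ^ 4 * |T - P - β ^ 3 / 6| ≤ D ^ 4 * (β ^ 4 / 4) := by gcongr
      _ = (D * β) ^ 4 / 4 := by ring
      _ ≤ 4 := by linarith [hs_pow 4]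
  have h2 : |D ^ 4 * P * ((1 - T) ^ (d - 1) - (1 - N * T))| ≤ 4 := by
    have hNT0 : 0 ≤ N * T := mul_nonneg (by rw [hN]; positivity) (by linarith)
    have hU : (1 - T) ^ (d - 1) - (1 - N * T) ≤ (D * β ^ 2 / 2) ^ 2 / 2 := by
      nlinarith [pow_le_pow_left₀ hNT0 hNT 2]
    rw [abs_of_nonneg (by have := sub_nonneg.mpr hUlo; positivity)]
    calc D ^ 4 * P * ((1 - T) ^ (d - 1) - (1 - N * T))
        ≤ D ^ 4 * (β ^ 2 / 2) * ((D * β ^ 2 / 2) ^ 2 / 2) := by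
          gcongr
          linarith
      _ = (D * β) ^ 6 / 16 := by ring
      _ ≤ 4 := by linarith [hs_pow 6]
  have h3 : |D ^ 4 * N * (β ^ 4 / 4 - P * T)| ≤ 16 := by
    have hPT0 : 0 ≤ β ^ 4 / 4 - P * T := by nlinarith
    have hPT5 : β ^ 4 / 4 - P * T ≤ β ^ 5 / 2 := by nlinarith [pow_nonneg hβ0 6]
    rw [abs_of_nonneg (by positivity)]
    calc D ^ 4 * N * (β ^ 4 / 4 - P * T) ≤ D ^ 4 * D * (β ^ 5 / 2) := by
          gcongr
          linarith
      _ = (D * β) ^ 5 / 2 := by ring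
      _ ≤ 16 := by linarith [hs_pow 5]
  have h4 := abs_leading_terms_sub_le (by positivity) hs1 hs2 hsA
  rw [le_div_iff₀ (by positivity), ← abs_of_pos (by positivity : (0 : ℝ) < D ^ 3), ← abs_mul]
  calc |(D * T - D * P * (1 - T) ^ (d - 1) - 5 / 12 / D ^ 2) * D ^ 3|
      = |(D ^ 4 * β ^ 3 / 6 + D ^ 4 * (D - 1) * β ^ 4 / 4 - 5 * D / 12)
          + D ^ 4 * (T - P - β ^ 3 / 6) - D ^ 4 * P * ((1 - T) ^ (d - 1) - (1 - N * T))
          - D ^ 4 * N * (β ^ 4 / 4 - P * T)| := by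
        congr 1; rw [← hND]; field_simp; ring
    _ ≤ (5 * A + 4) + 4 + 4 + 16 := by
        refine (abs_sub _ _).trans (add_le_add ((abs_sub _ _).trans
          (add_le_add ((abs_add_le _ _).trans (add_le_add h4 h1)) h2)) h3)
    _ = 5 * A + 28 := by ring

/-- For every `A > 0` there exist `C > 0` and `d₀ ∈ ℕ` such that for all
integers `d ≥ d₀` and all `α ∈ [0, A]`, setting `β = 1/d + α/d²`, one has
`|d·p_{≥2}(β) − d·p₂(β)·(1 − p_{≥2}(β))^{d−1} − (5/12)/d²| ≤ C/d³`. -/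
theorem sum_k_PA_prime_expansion (A : ℝ) (hA : 0 < A) :
    ∃ C : ℝ, 0 < C ∧ ∃ d₀ : ℕ, ∀ d : ℕ, d₀ ≤ d → ∀ α ∈ Set.Icc (0 : ℝ) A,
      ∀ β : ℝ, β = 1 / (d : ℝ) + α / (d : ℝ) ^ 2 →
        |(d : ℝ) * poissonTail β 2
            - (d : ℝ) * poissonProb β 2 * (1 - poissonTail β 2) ^ (d - 1)
            - (5 / 12) / (d : ℝ) ^ 2|
          ≤ C / (d : ℝ) ^ 3 := by
  refine ⟨5 * A + 28, by positivity, ⌈A⌉₊ + 2, fun d hd α hα β hβ => ?_⟩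
  have hd2 : (2 : ℝ) ≤ d := by exact_mod_cast (by omega : 2 ≤ d)
  have hAd : A ≤ d := (Nat.le_ceil A).trans (by exact_mod_cast (by omega : ⌈A⌉₊ ≤ d))
  have hs : (d : ℝ) * β = 1 + α / d := by rw [hβ]; field_simp
  have hαd : 0 ≤ α / d := by have := hα.1; positivity
  have hs2 : (d : ℝ) * β ≤ 2 := by
    rw [hs]; linarith [(div_le_one (by linarith)).mpr (hα.2.trans hAd)]
  have hβ0 : 0 ≤ β := by rw [hβ]; have := hα.1; positivity
  have hβ1 : β ≤ 1 := by nlinarith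
  have hTP : poissonTail β 2 - poissonProb β 2 = poissonTail β 3 := (poissonTail_succ β 2).symm
  refine abs_sub_five_div_twelve_le_of_taylor_bounds (by omega) (by linarith) hs2 ?_
    (le_poissonProb_two β) (hTP ▸ poissonTail_nonneg hβ0 3) (poissonTail_two_le hβ0 hβ1)
    (hTP ▸ abs_poissonTail_three_sub_le hβ0 hβ1)
  rw [hs, add_sub_cancel_left, mul_div_cancel₀ _ (by positivity)]
  exact hα.2
end

section
/- For every A > 0 there exist constants C > 0 and d₀ ∈ ℕ such that for all integers d ≥ d₀ and all α ∈ [0, A], setting β = 1/d + α/d², one has |1 − (1 − p_{≥2}(β))^d − d·p₂(β)·(1 − p_{≥2}(β))^{d−1} − (7/24)/d²| ≤ C/d³. -/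
open Real Finset

lemma one_sub_poissonTail_two (β : ℝ) : 1 - poissonTail β 2 = exp (-β) * (1 + β) := by
  simp [poissonTail_eq_one_sub_sum, sum_range_succ, poissonProb]
  ring

lemma one_sub_poissonTail_two_eq_exp {β : ℝ} (hβ : -1 < β) :
    1 - poissonTail β 2 = exp (-(β - log (1 + β))) := by
  rw [one_sub_poissonTail_two, neg_sub, sub_eq_add_neg, exp_add, exp_log (by linarith), mul_comm]

lemma abs_exp_sub_one_sub_id_sub_sq_div_two_le {x : ℝ} (hx : |x| ≤ 1) :
    |exp x - 1 - x - x ^ 2 / 2| ≤ |x| ^ 3 / 4 := by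
  have h := exp_bound hx (n := 3) (by norm_num)
  norm_num [sum_range_succ, Nat.factorial] at h
  calc |exp x - 1 - x - x ^ 2 / 2| = |exp x - (1 + x + x ^ 2 / 2)| := by ring_nf
    _ ≤ |x| ^ 3 * (2 / 9) := h
    _ ≤ |x| ^ 3 / 4 := by nlinarith [pow_nonneg (abs_nonneg x) 3]

lemma abs_sub_log_one_add_sub_le {β : ℝ} (h0 : 0 ≤ β) (h1 : β ≤ 1 / 2) :
    |β - log (1 + β) - (β ^ 2 / 2 - β ^ 3 / 3)| ≤ 2 * β ^ 4 := by
  have h := abs_log_sub_add_sum_range_le (x := -β)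
    (by rw [abs_neg, abs_of_nonneg h0]; linarith) 3
  norm_num [sum_range_succ, abs_of_nonneg h0] at h
  calc |β - log (1 + β) - (β ^ 2 / 2 - β ^ 3 / 3)|
      = |-β + β ^ 2 / 2 + (-β) ^ 3 / 3 + log (1 + β)| := by rw [← abs_neg]; ring_nf
    _ ≤ β ^ 4 / (1 - β) := h
    _ ≤ 2 * β ^ 4 := by
      rw [div_le_iff₀ (by linarith)]; nlinarith [pow_nonneg h0 4]

lemma abs_one_sub_exp_neg_sub_mul_exp_neg_le {s a w : ℝ} (hs0 : 0 ≤ s) (hs1 : s ≤ 1)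
    (ha : 0 ≤ a) (hw : |w| ≤ 1) :
    |1 - exp (-s) - a * exp (-w) - (s - s ^ 2 / 2 - a * (1 - w))| ≤ s ^ 3 + a * w ^ 2 := by
  have hs := abs_exp_sub_one_sub_id_sub_sq_div_two_le (x := -s)
    (by rwa [abs_neg, abs_of_nonneg hs0])
  have hw := abs_exp_sub_one_sub_id_le (x := -w) (by rwa [abs_neg])
  rw [abs_neg, abs_of_nonneg hs0] at hs
  calc |1 - exp (-s) - a * exp (-w) - (s - s ^ 2 / 2 - a * (1 - w))|
      = |-(exp (-s) - 1 - -s - (-s) ^ 2 / 2) - a * (exp (-w) - 1 - -w)| := by ring_nf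
    _ ≤ |-(exp (-s) - 1 - -s - (-s) ^ 2 / 2)| + |a * (exp (-w) - 1 - -w)| := abs_sub _ _
    _ ≤ s ^ 3 + a * w ^ 2 := by
      rw [abs_neg, abs_mul, abs_of_nonneg ha]
      nlinarith [mul_le_mul_of_nonneg_left hw ha, pow_nonneg hs0 3]

lemma nonneg_and_le_sq_of_abs_sub_le {β u : ℝ} (hβ0 : 0 ≤ β) (hβ : β ≤ 1 / 3)
    (hu : |u - (β ^ 2 / 2 - β ^ 3 / 3)| ≤ 2 * β ^ 4) : 0 ≤ u ∧ u ≤ β ^ 2 := by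
  obtain ⟨h1, h2⟩ := abs_le.mp hu
  have hβ2 : 0 ≤ β ^ 2 := sq_nonneg β
  constructor <;> nlinarith [mul_le_mul_of_nonneg_left hβ hβ2,
    mul_le_mul_of_nonneg_left hβ (pow_nonneg hβ0 3)]

lemma abs_quadratic_approx_sub_leading_le {n x β u : ℝ} (hnx : n * x = 1) (hx0 : 0 < x)
    (hx : x ≤ 1 / 6) (hβ0 : 0 ≤ β) (hβ : β ≤ 2 * x)
    (hu : |u - (β ^ 2 / 2 - β ^ 3 / 3)| ≤ 2 * β ^ 4) :
    |n * u - (n * u) ^ 2 / 2 - n * β ^ 2 / 2 * (1 - (β + (n - 1) * u))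
      - (n ^ 2 * β ^ 4 / 8 + n * β ^ 3 / 6)| ≤ 70 * x ^ 3 := by
  obtain ⟨hu0, huβ⟩ := nonneg_and_le_sq_of_abs_sub_le hβ0 (by linarith) hu
  set v := β ^ 2 / 2 - β ^ 3 / 3 with hv_def
  have hn : 1 ≤ n := by nlinarith
  have hnβ : n * β ≤ 2 := by nlinarith
  have hnβ2 : n * β ^ 2 ≤ 1 := by nlinarith
  have hv : 0 ≤ v := by rw [hv_def]; nlinarith
  have hvβ : v ≤ β ^ 2 := by rw [hv_def]; nlinarith [pow_nonneg hβ0 3]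
  have hβ3 : β ^ 3 ≤ 8 * x ^ 3 := by nlinarith [pow_le_pow_left₀ hβ0 hβ 3]
  have hnβ4 : n * β ^ 4 ≤ 16 * x ^ 3 := by nlinarith [pow_nonneg hβ0 3]
  have hsplit : n * u - (n * u) ^ 2 / 2 - n * β ^ 2 / 2 * (1 - (β + (n - 1) * u))
      - (n ^ 2 * β ^ 4 / 8 + n * β ^ 3 / 6)
      = (u - v) * (n - n ^ 2 * (u + v) / 2 + n * β ^ 2 / 2 * (n - 1))
        - (n * β ^ 4 / 4 - n * β ^ 5 / 6 + n ^ 2 * β ^ 6 / 18) := by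
    rw [hv_def]; ring
  have hfactor : |n - n ^ 2 * (u + v) / 2 + n * β ^ 2 / 2 * (n - 1)| ≤ 2 * n := by
    rw [abs_le]; constructor <;> nlinarith
  have htail : |n * β ^ 4 / 4 - n * β ^ 5 / 6 + n ^ 2 * β ^ 6 / 18| ≤ 6 * x ^ 3 := by
    have hnβ4_0 : 0 ≤ n * β ^ 4 := by positivity
    have h5 : n * β ^ 5 ≤ n * β ^ 4 * (1 / 3) := by
      nlinarith [mul_le_mul_of_nonneg_left (show β ≤ 1 / 3 by linarith) hnβ4_0]
    have h6 : n ^ 2 * β ^ 6 ≤ n * β ^ 4 := by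
      nlinarith [mul_le_mul_of_nonneg_left hnβ2 hnβ4_0]
    rw [abs_le]; constructor <;> nlinarith [pow_nonneg hβ0 5, pow_nonneg hβ0 6]
  rw [hsplit]
  calc _ ≤ |(u - v) * (n - n ^ 2 * (u + v) / 2 + n * β ^ 2 / 2 * (n - 1))|
        + |n * β ^ 4 / 4 - n * β ^ 5 / 6 + n ^ 2 * β ^ 6 / 18| := abs_sub _ _
    _ ≤ 2 * β ^ 4 * (2 * n) + 6 * x ^ 3 := by
      rw [abs_mul]; gcongr
    _ ≤ 70 * x ^ 3 := by nlinarith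

lemma abs_one_sub_exp_sub_leading_le {n x β u : ℝ} (hnx : n * x = 1) (hx0 : 0 < x)
    (hx : x ≤ 1 / 6) (hβ0 : 0 ≤ β) (hβ : β ≤ 2 * x)
    (hu : |u - (β ^ 2 / 2 - β ^ 3 / 3)| ≤ 2 * β ^ 4) :
    |1 - exp (-(n * u)) - n * (exp (-β) * β ^ 2 / 2) * exp (-((n - 1) * u))
      - (n ^ 2 * β ^ 4 / 8 + n * β ^ 3 / 6)| ≤ 210 * x ^ 3 := by
  obtain ⟨hu0, huβ⟩ := nonneg_and_le_sq_of_abs_sub_le hβ0 (by linarith) hu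
  have hn : 1 ≤ n := by nlinarith
  have hnβ2 : n * β ^ 2 ≤ 4 * x := by nlinarith
  have hs0 : 0 ≤ n * u := by positivity
  have hs : n * u ≤ 4 * x := by nlinarith
  have hw0 : 0 ≤ β + (n - 1) * u := by nlinarith
  have hw : β + (n - 1) * u ≤ 6 * x := by nlinarith
  have htaylor := abs_one_sub_exp_neg_sub_mul_exp_neg_le hs0 (by linarith)
    (by positivity : 0 ≤ n * β ^ 2 / 2)
    (abs_le.mpr ⟨by linarith, by linarith⟩ : |β + (n - 1) * u| ≤ 1)
  have hexp : n * (exp (-β) * β ^ 2 / 2) * exp (-((n - 1) * u))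
      = n * β ^ 2 / 2 * exp (-(β + (n - 1) * u)) := by
    rw [neg_add, exp_add]; ring
  rw [hexp]
  calc _ ≤ |1 - exp (-(n * u)) - n * β ^ 2 / 2 * exp (-(β + (n - 1) * u))
          - (n * u - (n * u) ^ 2 / 2 - n * β ^ 2 / 2 * (1 - (β + (n - 1) * u)))|
        + |n * u - (n * u) ^ 2 / 2 - n * β ^ 2 / 2 * (1 - (β + (n - 1) * u))
          - (n ^ 2 * β ^ 4 / 8 + n * β ^ 3 / 6)| := abs_sub_le _ _ _
    _ ≤ (n * u) ^ 3 + n * β ^ 2 / 2 * (β + (n - 1) * u) ^ 2 + 70 * x ^ 3 :=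
      add_le_add htaylor (abs_quadratic_approx_sub_leading_le hnx hx0 hx hβ0 hβ hu)
    _ ≤ 210 * x ^ 3 := by
      have h1 : (n * u) ^ 3 ≤ (4 * x) ^ 3 := pow_le_pow_left₀ hs0 hs 3
      have h2 : (β + (n - 1) * u) ^ 2 ≤ (6 * x) ^ 2 := pow_le_pow_left₀ hw0 hw 2
      nlinarith [mul_le_mul hnβ2 h2 (sq_nonneg _) (by positivity)]

lemma abs_leading_sub_seven_div_twenty_four_le {n x α β : ℝ} (hnx : n * x = 1) (hx0 : 0 < x)
    (hα0 : 0 ≤ α) (hαx : α * x ≤ 1) (hβ : β = x + α * x ^ 2) :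
    |n ^ 2 * β ^ 4 / 8 + n * β ^ 3 / 6 - 7 / 24 * x ^ 2| ≤ 4 * α * x ^ 3 := by
  have hn : n = x⁻¹ := eq_inv_of_mul_eq_one_left hnx
  have hαx0 : 0 ≤ α * x := by positivity
  have hexpand : n ^ 2 * β ^ 4 / 8 + n * β ^ 3 / 6 - 7 / 24 * x ^ 2
      = α * x ^ 3 * (1 + 5 / 4 * (α * x) + 2 / 3 * (α * x) ^ 2 + 1 / 8 * (α * x) ^ 3) := by
    subst hn hβ; field_simp; ring
  rw [hexpand, abs_of_nonneg (by positivity)]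
  have hcubic : 1 + 5 / 4 * (α * x) + 2 / 3 * (α * x) ^ 2 + 1 / 8 * (α * x) ^ 3 ≤ 4 := by
    nlinarith [pow_le_one₀ hαx0 hαx (n := 2), pow_le_one₀ hαx0 hαx (n := 3)]
  nlinarith [mul_le_mul_of_nonneg_left hcubic (by positivity : 0 ≤ α * x ^ 3)]

/-- For every `A > 0` there exist `C > 0` and `d₀ ∈ ℕ` such that for all
integers `d ≥ d₀` and all `α ∈ [0, A]`, setting `β = 1/d + α/d²`, one has
`|1 − (1 − p_{≥2}(β))^d − d·p₂(β)·(1 − p_{≥2}(β))^{d−1} − (7/24)/d²| ≤ C/d³`. -/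
theorem sum_PA_prime_expansion (A : ℝ) (hA : 0 < A) :
    ∃ C : ℝ, 0 < C ∧ ∃ d₀ : ℕ, ∀ d : ℕ, d₀ ≤ d → ∀ α ∈ Set.Icc (0 : ℝ) A,
      ∀ β : ℝ, β = 1 / (d : ℝ) + α / (d : ℝ) ^ 2 →
        |1 - (1 - poissonTail β 2) ^ d
            - (d : ℝ) * poissonProb β 2 * (1 - poissonTail β 2) ^ (d - 1)
            - (7 / 24) / (d : ℝ) ^ 2|
          ≤ C / (d : ℝ) ^ 3 := by
  refine ⟨210 + 4 * A, by positivity, ⌈A⌉₊ + 6, fun d hd α ⟨hα0, hαA⟩ β hβ ↦ ?_⟩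
  have hd : A + 6 ≤ (d : ℝ) := by
    have hceil : (⌈A⌉₊ + 6 : ℝ) ≤ d := by exact_mod_cast hd
    linarith [Nat.le_ceil A]
  have hd0 : (0 : ℝ) < d := by linarith
  set x := (d : ℝ)⁻¹ with hx_def
  have hx0 : 0 < x := inv_pos.mpr hd0
  have hnx : (d : ℝ) * x = 1 := mul_inv_cancel₀ hd0.ne'
  have hx : x ≤ 1 / 6 := by rw [one_div]; exact inv_anti₀ (by norm_num) (by linarith)
  have hαx : α * x ≤ 1 := by rw [← div_eq_mul_inv, div_le_one hd0]; linarith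
  have hβx : β = x + α * x ^ 2 := by rw [hβ, hx_def]; ring
  have hβ0 : 0 ≤ β := by rw [hβx]; positivity
  have hβ2x : β ≤ 2 * x := by nlinarith
  rw [one_sub_poissonTail_two_eq_exp (by linarith), poissonProb_two, ← exp_nat_mul, ← exp_nat_mul,
    Nat.cast_sub (by omega : 1 ≤ d), Nat.cast_one, mul_neg, mul_neg]
  have hexpansion := abs_one_sub_exp_sub_leading_le hnx hx0 hx hβ0 hβ2x
    (abs_sub_log_one_add_sub_le hβ0 (by linarith))
  have hleading := abs_leading_sub_seven_div_twenty_four_le hnx hx0 hα0 hαx hβx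
  rw [show (7 / 24 : ℝ) / d ^ 2 = 7 / 24 * x ^ 2 by rw [hx_def]; ring,
    show (210 + 4 * A) / (d : ℝ) ^ 3 = (210 + 4 * A) * x ^ 3 by rw [hx_def]; ring]
  calc _ ≤ _ := abs_sub_le _ (d ^ 2 * β ^ 4 / 8 + d * β ^ 3 / 6) _
    _ ≤ 210 * x ^ 3 + 4 * α * x ^ 3 := add_le_add hexpansion hleading
    _ ≤ (210 + 4 * A) * x ^ 3 := by nlinarith [pow_pos hx0 3]
end

section
/- For every ε ∈ (0,1) there exists d₀ ∈ ℕ such that for every integer d ≥ d₀ the following holds: if a sequence (σ_m)_{m≥0} with values in [0,1] satisfies σ_m ≤ (1 − ε/d) · Σ_{ℓ=3}^m σ_{m−ℓ} · (1/d²)^{ℓ−3} for all m ≥ 3, then σ_k ≤ (1 − ε/(6d))^{k−2} for all k ≥ 0. In particular σ_k → 0 exponentially fast as k → ∞. -/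
/-!
Fix `t = ε/d`, `r = 1/d²` and `q = 1 - t/6`. If `σ j ≤ q^(j-2)` for all `j < k`, then the
recursion bounds `σ k` by `(1 - t) q^(k-2) q⁻³ ∑ (r/q)^j ≤ q^(k-2) (1 - t) / (q² (q - r))`, so
strong induction closes as soon as `1 - t ≤ q² (q - r)`. For `d ≥ 3/ε` we have `r ≤ t/3`, and then
`q² (q - r) ≥ (1 - t/6)² (1 - t/2) ≥ 1 - t` on `[0, 1]`.
-/

open Finset Filter

lemma sum_Icc_pow_sub_le {ρ : ℝ} (h0 : 0 ≤ ρ) (h1 : ρ < 1) (a m : ℕ) :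
    ∑ ℓ ∈ Icc a m, ρ ^ (ℓ - a) ≤ (1 - ρ)⁻¹ := by
  rw [← Ico_add_one_right_eq_Icc, sum_Ico_eq_sum_range, range_eq_Ico]
  simpa using geom_sum_Ico_le_of_lt_one (m := 0) (n := m + 1 - a) h0 h1

lemma pow_sub_sub_le_div_pow {q : ℝ} (hq0 : 0 < q) (hq1 : q ≤ 1) (k ℓ : ℕ) :
    q ^ (k - ℓ - 2) ≤ q ^ (k - 2) / q ^ ℓ := by
  rw [le_div_iff₀ (by positivity), ← pow_add]
  exact pow_le_pow_of_le_one hq0.le hq1 (by omega)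

lemma le_pow_sub_two_of_le_mul_sum {q r c : ℝ} {σ : ℕ → ℝ} (hq0 : 0 < q) (hq1 : q ≤ 1) (hr0 : 0 ≤ r) (hrq : r < q)
    (hc0 : 0 ≤ c) (hc : c ≤ q ^ 2 * (q - r)) (hσ : ∀ m, σ m ≤ 1)
    (hrec : ∀ m, 3 ≤ m → σ m ≤ c * ∑ ℓ ∈ Icc 3 m, σ (m - ℓ) * r ^ (ℓ - 3)) (k : ℕ) :
    σ k ≤ q ^ (k - 2) := by
  induction k using Nat.strong_induction_on with
  | _ k ih =>
  rcases lt_or_ge k 3 with hk | hk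
  · simpa [show k - 2 = 0 by omega] using hσ k
  have hρ0 : 0 ≤ r / q := by positivity
  have hρ1 : r / q < 1 := (div_lt_one hq0).2 hrq
  have hterm : ∀ ℓ ∈ Icc 3 k,
      σ (k - ℓ) * r ^ (ℓ - 3) ≤ q ^ (k - 2) / q ^ 3 * (r / q) ^ (ℓ - 3) := by
    intro ℓ hℓ
    obtain ⟨j, rfl⟩ : ∃ j, ℓ = j + 3 := ⟨ℓ - 3, by grind⟩
    rw [Nat.add_sub_cancel]
    calc σ (k - (j + 3)) * r ^ j ≤ q ^ (k - 2) / q ^ (j + 3) * r ^ j := by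
          gcongr
          exact (ih _ (by omega)).trans (pow_sub_sub_le_div_pow hq0 hq1 k _)
      _ = q ^ (k - 2) / q ^ 3 * (r / q) ^ j := by
          rw [div_pow, pow_add]; ring
  calc σ k ≤ c * ∑ ℓ ∈ Icc 3 k, σ (k - ℓ) * r ^ (ℓ - 3) := hrec k hk
    _ ≤ c * (q ^ (k - 2) / q ^ 3 * (1 - r / q)⁻¹) := by
        refine mul_le_mul_of_nonneg_left ?_ hc0
        calc _ ≤ ∑ ℓ ∈ Icc 3 k, q ^ (k - 2) / q ^ 3 * (r / q) ^ (ℓ - 3) := sum_le_sum hterm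
          _ ≤ _ := by
            rw [← mul_sum]
            gcongr
            exact sum_Icc_pow_sub_le hρ0 hρ1 3 k
    _ = q ^ (k - 2) * (c / (q ^ 2 * (q - r))) := by
        field_simp [(sub_pos.2 hrq).ne']
    _ ≤ q ^ (k - 2) := by
        refine mul_le_of_le_one_right (by positivity) ((div_le_one ?_).2 hc)
        exact mul_pos (by positivity) (sub_pos.2 hrq)

lemma one_sub_le_sq_mul_sub {t r : ℝ} (ht0 : 0 ≤ t) (ht1 : t ≤ 1) (hr : r ≤ t / 3) :
    1 - t ≤ (1 - t / 6) ^ 2 * (1 - t / 6 - r) := by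
  nlinarith [mul_nonneg ht0 ht0, mul_nonneg (mul_nonneg ht0 ht0) (sub_nonneg.2 ht1)]

/-- For every `ε ∈ (0,1)` there exists `d₀ ∈ ℕ` such that for every
integer `d ≥ d₀` the following holds: if a sequence `(σ_m)_{m≥0}` with values in `[0,1]`
satisfies `σ_m ≤ (1 − ε/d) · Σ_{ℓ=3}^m σ_{m−ℓ} · (1/d²)^{ℓ−3}` for all `m ≥ 3`, then
`σ_k ≤ (1 − ε/(6d))^{k−2}` for all `k ≥ 0`; in particular `σ_k → 0` as `k → ∞`. -/
theorem exponential_decay_recursion (ε : ℝ) (hε : ε ∈ Set.Ioo (0 : ℝ) 1) :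
    ∃ d₀ : ℕ, ∀ d : ℕ, d₀ ≤ d → ∀ σ : ℕ → ℝ,
      (∀ m, σ m ∈ Set.Icc (0 : ℝ) 1) →
      (∀ m : ℕ, 3 ≤ m →
        σ m ≤ (1 - ε / (d : ℝ)) *
          ∑ ℓ ∈ Finset.Icc 3 m, σ (m - ℓ) * ((1 : ℝ) / (d : ℝ) ^ 2) ^ (ℓ - 3)) →
      (∀ k : ℕ, σ k ≤ (1 - ε / (6 * (d : ℝ))) ^ (k - 2)) ∧
        Filter.Tendsto σ Filter.atTop (nhds 0) := by
  obtain ⟨hε0, hε1⟩ := hε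
  refine ⟨⌈3 / ε⌉₊, fun d hd σ hσ hrec => ?_⟩
  have hεd : 3 ≤ ε * d := (div_le_iff₀' hε0).1 (Nat.ceil_le.1 hd)
  have hd0 : (0 : ℝ) < d := by nlinarith
  have ht0 : 0 ≤ ε / d := by positivity
  have ht1 : ε / d ≤ 1 := (div_le_one hd0).2 (by nlinarith)
  have hr : 1 / (d : ℝ) ^ 2 ≤ ε / d / 3 := by
    rw [div_div, div_le_div_iff₀ (by positivity) (by positivity)]; nlinarith
  have hq : 1 - ε / (6 * d) = 1 - ε / d / 6 := by ring
  have hstep : 0 < ε / (6 * d) := by positivity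
  have bound : ∀ k, σ k ≤ (1 - ε / (6 * d)) ^ (k - 2) := by
    rw [hq]
    refine le_pow_sub_two_of_le_mul_sum (by linarith) (by linarith) (by positivity)
      (by linarith) (by linarith) ?_ (fun m => (hσ m).2) hrec
    linarith [one_sub_le_sq_mul_sub ht0 ht1 hr]
  refine ⟨bound, squeeze_zero (fun k => (hσ k).1) bound ?_⟩
  exact (tendsto_pow_atTop_nhds_zero_of_lt_one (by linarith) (by linarith)).comp
    (tendsto_sub_atTop_nat 2)
end

section
/- Let u ∈ [0,1]. Let U₁, U₂ be independent random variables uniformly distributed on [0,1], set X = min{U₁,U₂} + 1 − max{U₁,U₂}, and let V be a random variable independent of (U₁,U₂) taking the value 0 with probability u², the value 1 with probability (1−u)², and the value 2 with probability 2u(1−u). Define (L, M) = (X, 1−X) if V = 0, (L, M) = (X, X) if V = 1, and (L, M) = (1, 1) if V = 2. Then E[L + M] = 1 + 2u(1−u) + (1/3)(1−u)². -/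
/-! Since `X = 1 - |U₁ - U₂|`, pointwise `L + M = 2 - 1{V = 0} - 2 |U₁ - U₂| 1{V = 1}`.
By independence of `V` and `(U₁, U₂)` the expectation is `2 - u² - 2 (1 - u)² E|U₁ - U₂|`,
and `E|U₁ - U₂| = 1/3` is the mean of `|x - y|` over the unit square. -/

open MeasureTheory ProbabilityTheory

/-- `X = min{U₁,U₂} + 1 − max{U₁,U₂}`, the length of the connected time-interval
determined by the two link times. -/
noncomputable def Xlen (u₁ u₂ : ℝ) : ℝ := min u₁ u₂ + 1 - max u₁ u₂

/-- `L = |Λ_ρ|`:  `X` if both links are crosses (`V = 0`), `X` if both are double bars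
(`V = 1`), and `1` in the mixed case (`V = 2`). -/
noncomputable def Llen (v : ℕ) (u₁ u₂ : ℝ) : ℝ :=
  if v = 0 then Xlen u₁ u₂ else if v = 1 then Xlen u₁ u₂ else 1

/-- `M = |Λ_x|`:  `1 − X` if both links are crosses (`V = 0`), `X` if both are double
bars (`V = 1`), and `1` in the mixed case (`V = 2`). -/
noncomputable def Mlen (v : ℕ) (u₁ u₂ : ℝ) : ℝ :=
  if v = 0 then 1 - Xlen u₁ u₂ else if v = 1 then Xlen u₁ u₂ else 1

open Set

theorem integral_abs_sub_of_mem_Icc {a b x : ℝ} (hx : x ∈ Icc a b) :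
    ∫ y in a..b, |y - x| = ((x - a) ^ 2 + (b - x) ^ 2) / 2 := by
  have hcont : Continuous fun y : ℝ => |y - x| := by fun_prop
  have hpiece : ∀ c, ∫ y in uIoc x c, |y - x| = (c - x) ^ 2 / 2 := fun c => by
    simpa [sq_abs, one_add_one_eq_two] using integral_pow_abs_sub_uIoc (a := x) (b := c) (n := 1)
  rw [← intervalIntegral.integral_add_adjacent_intervals (b := x) (hcont.intervalIntegrable _ _)
    (hcont.intervalIntegrable _ _), intervalIntegral.integral_of_le hx.1,
    intervalIntegral.integral_of_le hx.2, ← uIoc_of_ge hx.1, ← uIoc_of_le hx.2, hpiece, hpiece]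
  ring

theorem integrable_abs_sub_prod_restrict_Icc : Integrable (fun p : ℝ × ℝ => |p.1 - p.2|)
    ((volume.restrict (Icc (0 : ℝ) 1)).prod (volume.restrict (Icc 0 1))) := by
  rw [Measure.prod_restrict, ← Measure.volume_eq_prod]
  exact (by fun_prop : Continuous fun p : ℝ × ℝ => |p.1 - p.2|).continuousOn.integrableOn_compact
    (isCompact_Icc.prod isCompact_Icc)

theorem integral_abs_sub_prod_restrict_Icc :
    ∫ p : ℝ × ℝ, |p.1 - p.2| ∂((volume.restrict (Icc (0 : ℝ) 1)).prod (volume.restrict (Icc 0 1)))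
      = 1 / 3 := by
  have hinner : ∀ x ∈ Icc (0 : ℝ) 1, ∫ y in Icc 0 1, |x - y| = (x ^ 2 + (1 - x) ^ 2) / 2 := by
    intro x hx
    simp_rw [abs_sub_comm x]
    rw [integral_Icc_eq_integral_Ioc, ← intervalIntegral.integral_of_le zero_le_one,
      integral_abs_sub_of_mem_Icc hx, sub_zero]
  rw [integral_prod _ integrable_abs_sub_prod_restrict_Icc,
    setIntegral_congr_fun measurableSet_Icc hinner, integral_Icc_eq_integral_Ioc,
    ← intervalIntegral.integral_of_le zero_le_one, intervalIntegral.integral_div,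
    intervalIntegral.integral_add ((continuous_pow 2).intervalIntegrable _ _)
      ((by fun_prop : Continuous fun x : ℝ => (1 - x) ^ 2).intervalIntegrable _ _),
    intervalIntegral.integral_comp_sub_left (fun x => x ^ 2)]
  norm_num

theorem Xlen_eq_one_sub_abs_sub (a b : ℝ) : Xlen a b = 1 - |a - b| := by
  rcases le_total a b with h | h
  · rw [Xlen, min_eq_left h, max_eq_right h, abs_sub_comm, abs_of_nonneg (sub_nonneg.2 h)]; ring
  · rw [Xlen, min_eq_right h, max_eq_left h, abs_of_nonneg (sub_nonneg.2 h)]; ring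

theorem Llen_add_Mlen (v : ℕ) (a b : ℝ) :
    Llen v a b + Mlen v a b
      = 2 - ({0} : Set ℕ).indicator 1 v - 2 * (|a - b| * ({1} : Set ℕ).indicator 1 v) := by
  rcases v with _ | _ | v <;> simp [Llen, Mlen, Xlen_eq_one_sub_abs_sub] <;> ring

namespace MeasureTheory.pdf.IsUniform

variable {Ω E : Type*} [MeasurableSpace Ω] [MeasurableSpace E] {P : Measure Ω} {μ : Measure E}
  {X : Ω → E} {s : Set E}

theorem map_eq_restrict (hX : IsUniform X s P μ) (hs : μ s = 1) : P.map X = μ.restrict s := by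
  rw [hX, ProbabilityTheory.cond, hs, inv_one, one_smul]

theorem aemeasurable_of_measure_eq_one (hX : IsUniform X s P μ) (hs : μ s = 1) :
    AEMeasurable X P :=
  hX.aemeasurable (by simp [hs]) (by simp [hs])

theorem map_prodMk_eq_prod {F : Type*} [MeasurableSpace F] {ν : Measure F}
    {Y : Ω → F} {t : Set F} (hX : IsUniform X s P μ) (hY : IsUniform Y t P ν) (hs : μ s = 1)
    (ht : ν t = 1) (hXY : IndepFun X Y P) :
    P.map (fun ω => (X ω, Y ω)) = (μ.restrict s).prod (ν.restrict t) := by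
  have := hX.isProbabilityMeasure (by simp [hs]) (by simp [hs])
  rw [(indepFun_iff_map_prod_eq_prod_map_map (hX.aemeasurable_of_measure_eq_one hs)
    (hY.aemeasurable_of_measure_eq_one ht)).1 hXY, hX.map_eq_restrict hs, hY.map_eq_restrict ht]

end MeasureTheory.pdf.IsUniform

section UniformPair

variable {Ω : Type*} [MeasurableSpace Ω] {P : Measure Ω} {U₁ U₂ : Ω → ℝ}

theorem aemeasurable_prodMk_of_isUniform_Icc (h₁ : pdf.IsUniform U₁ (Icc 0 1) P)
    (h₂ : pdf.IsUniform U₂ (Icc 0 1) P) : AEMeasurable (fun ω => (U₁ ω, U₂ ω)) P :=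
  (h₁.aemeasurable_of_measure_eq_one (by simp)).prodMk
    (h₂.aemeasurable_of_measure_eq_one (by simp))

theorem integrable_abs_sub_of_isUniform_Icc (h₁ : pdf.IsUniform U₁ (Icc 0 1) P)
    (h₂ : pdf.IsUniform U₂ (Icc 0 1) P) (h : IndepFun U₁ U₂ P) :
    Integrable (fun ω => |U₁ ω - U₂ ω|) P :=
  (integrable_map_measure (g := fun p : ℝ × ℝ => |p.1 - p.2|) (by fun_prop)
    (aemeasurable_prodMk_of_isUniform_Icc h₁ h₂)).1
    (h₁.map_prodMk_eq_prod h₂ (by simp) (by simp) h ▸ integrable_abs_sub_prod_restrict_Icc)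

theorem integral_abs_sub_of_isUniform_Icc (h₁ : pdf.IsUniform U₁ (Icc 0 1) P)
    (h₂ : pdf.IsUniform U₂ (Icc 0 1) P) (h : IndepFun U₁ U₂ P) :
    ∫ ω, |U₁ ω - U₂ ω| ∂P = 1 / 3 := by
  rw [← integral_map (f := fun p : ℝ × ℝ => |p.1 - p.2|)
    (aemeasurable_prodMk_of_isUniform_Icc h₁ h₂) (by fun_prop),
    h₁.map_prodMk_eq_prod h₂ (by simp) (by simp) h, integral_abs_sub_prod_restrict_Icc]

end UniformPair

section IndicatorComp

variable {Ω α : Type*} [MeasurableSpace Ω] [MeasurableSpace α] [MeasurableSingletonClass α]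
  {P : Measure Ω} {V : Ω → α}

theorem integrable_indicator_singleton_one_comp [IsFiniteMeasure P] (hV : Measurable V) (a : α) :
    Integrable (fun ω => ({a} : Set α).indicator (1 : α → ℝ) (V ω)) P :=
  (integrable_const (1 : ℝ)).indicator (hV (measurableSet_singleton a))

theorem integral_indicator_singleton_one_comp (hV : Measurable V) (a : α) :
    ∫ ω, ({a} : Set α).indicator (1 : α → ℝ) (V ω) ∂P = (P {ω | V ω = a}).toReal :=
  integral_indicator_one (hV (measurableSet_singleton a))

end IndicatorComp

theorem expectation_L_plus_M_general
    {Ω : Type*} [MeasurableSpace Ω] (P : Measure Ω) [IsProbabilityMeasure P]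
    (u : ℝ)
    (U₁ U₂ : Ω → ℝ) (V : Ω → ℕ)
    (h₁ : pdf.IsUniform U₁ (Set.Icc (0 : ℝ) 1) P volume)
    (h₂ : pdf.IsUniform U₂ (Set.Icc (0 : ℝ) 1) P volume)
    (hVmeas : Measurable V)
    (hindepU : IndepFun U₁ U₂ P)
    (hindepV : IndepFun (fun ω => (U₁ ω, U₂ ω)) V P)
    (hV0 : P {ω | V ω = 0} = ENNReal.ofReal (u ^ 2))
    (hV1 : P {ω | V ω = 1} = ENNReal.ofReal ((1 - u) ^ 2)) :
    ∫ ω, (Llen (V ω) (U₁ ω) (U₂ ω) + Mlen (V ω) (U₁ ω) (U₂ ω)) ∂P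
      = 1 + 2 * u * (1 - u) + (1 / 3) * (1 - u) ^ 2 := by
  have hind : IndepFun (fun ω => |U₁ ω - U₂ ω|) (fun ω => ({1} : Set ℕ).indicator 1 (V ω)) P :=
    hindepV.comp (φ := fun p : ℝ × ℝ => |p.1 - p.2|) (by fun_prop)
      (measurable_of_countable (({1} : Set ℕ).indicator (1 : ℕ → ℝ)))
  have hint₀ := integrable_indicator_singleton_one_comp (P := P) hVmeas 0
  have hint₁ := integrable_indicator_singleton_one_comp (P := P) hVmeas 1
  have hintD := integrable_abs_sub_of_isUniform_Icc h₁ h₂ hindepU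
  have hP₀ : ∫ ω, ({0} : Set ℕ).indicator (1 : ℕ → ℝ) (V ω) ∂P = u ^ 2 := by
    rw [integral_indicator_singleton_one_comp hVmeas, hV0, ENNReal.toReal_ofReal (sq_nonneg _)]
  have hP₁ : ∫ ω, ({1} : Set ℕ).indicator (1 : ℕ → ℝ) (V ω) ∂P = (1 - u) ^ 2 := by
    rw [integral_indicator_singleton_one_comp hVmeas, hV1, ENNReal.toReal_ofReal (sq_nonneg _)]
  have hmul : ∫ ω, |U₁ ω - U₂ ω| * ({1} : Set ℕ).indicator (1 : ℕ → ℝ) (V ω) ∂P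
      = 1 / 3 * (1 - u) ^ 2 := by
    rw [hind.integral_fun_mul_eq_mul_integral hintD.1 hint₁.1,
      integral_abs_sub_of_isUniform_Icc h₁ h₂ hindepU, hP₁]
  have hint₂ : Integrable (fun ω => 2 - ({0} : Set ℕ).indicator (1 : ℕ → ℝ) (V ω)) P :=
    (integrable_const 2).sub hint₀
  have hint₃ : Integrable
      (fun ω => 2 * (|U₁ ω - U₂ ω| * ({1} : Set ℕ).indicator (1 : ℕ → ℝ) (V ω))) P :=
    (hind.integrable_mul hintD hint₁).const_mul 2
  simp only [Llen_add_Mlen]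
  rw [integral_sub hint₂ hint₃, integral_const_mul, hmul,
    integral_sub (integrable_const 2) hint₀, hP₀, integral_const, probReal_univ, one_smul]
  ring

/-- Let `u ∈ [0,1]`, let `U₁, U₂` be independent uniforms on `[0,1]`, let
`V` be independent of `(U₁,U₂)` with `P(V=0) = u²`, `P(V=1) = (1−u)²`,
`P(V=2) = 2u(1−u)`, and define `(L,M)` from `V` and `X = min{U₁,U₂} + 1 − max{U₁,U₂}`
as above.  Then `E[L + M] = 1 + 2u(1−u) + (1/3)(1−u)²`. -/
theorem expectation_L_plus_M
    {Ω : Type*} [MeasurableSpace Ω] (P : Measure Ω) [IsProbabilityMeasure P]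
    (u : ℝ) (hu : u ∈ Set.Icc (0 : ℝ) 1)
    (U₁ U₂ : Ω → ℝ) (V : Ω → ℕ)
    (h₁ : pdf.IsUniform U₁ (Set.Icc (0 : ℝ) 1) P volume)
    (h₂ : pdf.IsUniform U₂ (Set.Icc (0 : ℝ) 1) P volume)
    (hVmeas : Measurable V)
    (hindepU : IndepFun U₁ U₂ P)
    (hindepV : IndepFun (fun ω => (U₁ ω, U₂ ω)) V P)
    (hV0 : P {ω | V ω = 0} = ENNReal.ofReal (u ^ 2))
    (hV1 : P {ω | V ω = 1} = ENNReal.ofReal ((1 - u) ^ 2))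
    (hV2 : P {ω | V ω = 2} = ENNReal.ofReal (2 * u * (1 - u))) :
    ∫ ω, (Llen (V ω) (U₁ ω) (U₂ ω) + Mlen (V ω) (U₁ ω) (U₂ ω)) ∂P
      = 1 + 2 * u * (1 - u) + (1 / 3) * (1 - u) ^ 2 :=
  expectation_L_plus_M_general P u U₁ U₂ V h₁ h₂ hVmeas hindepU hindepV hV0 hV1
end

section
/- For every A > 0 there exist constants C > 0 and d₀ ∈ ℕ such that for all integers d ≥ d₀, all α ∈ [0, A], and all s ∈ [0, 1/d], setting β = 1/d + α/d², one has (e^{−β}(1+β))^d − (e^{−β}(1 + β − s·β))^d ≥ s − (s/d)·(3/2 − α) − s²/2 − C/d³. -/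
open Finset Real

/-!
Write `d = n + 1`, `a = 1 + β` and `b = 1 + β - sβ`. Pairing the terms of
`a ^ d - b ^ d = (a - b) ∑ aⁱ bⁿ⁻ⁱ` by AM-GM gives `a ^ d - b ^ d ≥ d · sβ · √(ab) ^ n`,
so the difference is at least `s · γ e^{-γ} √(ab) ^ n = s · e^E` with `γ = dβ = 1 + α / d`.
Since `e^E ≥ 1 + E` and `log (1 + x) ≥ x - x² / 2` for `x = α / d, β, (1 - s)β`, the exponent
satisfies `E ≥ -s / 2 - (3 / 2 - α) / d - (α² + 5α / 2) / d²`, and `s ≤ 1 / d` turns the last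
term into `O(1 / d³)`.
-/

section GeomSum

variable {R : Type*} [CommRing R] [LinearOrder R] [IsStrictOrderedRing R]

lemma two_mul_pow_le_sq_pow_mul_add (p q : R) {k n : ℕ} (hk : k ≤ n) :
    2 * (p * q) ^ n ≤ (p ^ 2) ^ k * (q ^ 2) ^ (n - k) + (p ^ 2) ^ (n - k) * (q ^ 2) ^ k := by
  obtain ⟨m, rfl⟩ := Nat.exists_eq_add_of_le hk
  rw [Nat.add_sub_cancel_left, ← sub_nonneg]
  convert sq_nonneg (p ^ k * q ^ m - p ^ m * q ^ k) using 1
  ring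

lemma succ_mul_pow_le_geom_sum₂_sq (p q : R) (n : ℕ) :
    (n + 1) * (p * q) ^ n ≤ ∑ i ∈ range (n + 1), (p ^ 2) ^ i * (q ^ 2) ^ (n - i) := by
  have hreflect : ∑ i ∈ range (n + 1), (p ^ 2) ^ (n - i) * (q ^ 2) ^ i
      = ∑ i ∈ range (n + 1), (p ^ 2) ^ i * (q ^ 2) ^ (n - i) := by
    rw [← sum_range_reflect]
    refine sum_congr rfl fun i hi => ?_
    rw [Nat.add_sub_cancel, Nat.sub_sub_self (mem_range_succ_iff.mp hi)]
  have hpairs := sum_le_sum (s := range (n + 1)) fun i hi =>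
    two_mul_pow_le_sq_pow_mul_add p q (mem_range_succ_iff.mp hi)
  rw [sum_const, card_range, sum_add_distrib, hreflect, nsmul_eq_mul] at hpairs
  push_cast at hpairs
  linarith

lemma succ_mul_sub_mul_pow_le_sq_pow_sub {p q : R} (h : q ^ 2 ≤ p ^ 2) (n : ℕ) :
    (n + 1) * (p ^ 2 - q ^ 2) * (p * q) ^ n ≤ (p ^ 2) ^ (n + 1) - (q ^ 2) ^ (n + 1) := by
  rw [← geom_sum₂_mul (p ^ 2) (q ^ 2) (n + 1), Nat.add_sub_cancel, mul_right_comm]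
  exact mul_le_mul_of_nonneg_right (succ_mul_pow_le_geom_sum₂_sq p q n) (sub_nonneg.mpr h)

end GeomSum

lemma sub_sq_div_two_le_log_one_add {x : ℝ} (hx : 0 ≤ x) : x - x ^ 2 / 2 ≤ log (1 + x) := by
  refine le_trans ?_ (le_log_one_add_of_nonneg hx)
  rw [le_div_iff₀ (by linarith)]
  nlinarith [pow_nonneg hx 3]

lemma log_add_add_one_le_mul_exp {γ : ℝ} (hγ : 0 < γ) (x : ℝ) :
    log γ + x + 1 ≤ γ * exp x := by
  simpa only [exp_add, exp_log hγ] using add_one_le_exp (log γ + x)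

/-- The right side is `log (γ e^{-γ} √(ab) ^ n)` with `γ = (n + 1) β = 1 + α / (n + 1)`. -/
lemma exponent_lower_bound {n α s β : ℝ} (hn : 0 ≤ n) (hα : 0 ≤ α) (hs0 : 0 ≤ s)
    (hs : s ≤ 1 / (n + 1)) (hβ : β = 1 / (n + 1) + α / (n + 1) ^ 2) :
    -s / 2 - (3 / 2 - α) / (n + 1) - (α ^ 2 + 5 * α / 2) / (n + 1) ^ 2
      ≤ log (1 + α / (n + 1)) - (1 + α / (n + 1))
        + n * (log (1 + β) + log (1 + β - s * β)) / 2 := by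
  set u := 1 / (n + 1) with hu
  have hu0 : 0 < u := by positivity
  have hnu : n * u = 1 - u := by rw [hu]; field_simp; ring
  have hu1 : u ≤ 1 := by nlinarith
  have hdiv : ∀ x : ℝ, x / (n + 1) = x * u ∧ x / (n + 1) ^ 2 = x * u ^ 2 := fun x => by
    constructor <;> (rw [hu]; field_simp)
  rw [(hdiv α).1, (hdiv _).1, (hdiv _).2]
  rw [(hdiv α).2] at hβ
  have hβ0 : 0 ≤ β := by rw [hβ]; positivity
  have hlogγ := sub_sq_div_two_le_log_one_add (mul_nonneg hα hu0.le)
  have hloga := sub_sq_div_two_le_log_one_add hβ0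
  have hlogb := sub_sq_div_two_le_log_one_add (mul_nonneg (sub_nonneg.mpr (hs.trans hu1)) hβ0)
  rw [show 1 + (1 - s) * β = 1 + β - s * β by ring] at hlogb
  have hsq : ((1 - s) * β) ^ 2 ≤ β ^ 2 := by
    rw [mul_pow]
    exact mul_le_of_le_one_left (sq_nonneg β) (pow_le_one₀ (by linarith) (by linarith))
  have hlogs :
      n * (2 * β - s * β - β ^ 2) / 2 ≤ n * (log (1 + β) + log (1 + β - s * β)) / 2 := by
    gcongr
    nlinarith [hloga, hlogb, hsq]
  have hnβ : n * β = (1 - u) * (1 + α * u) := by rw [hβ]; linear_combination (1 + α * u) * hnu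
  refine le_trans ?_ (add_le_add (sub_le_sub_right hlogγ _) hlogs)
  nlinarith [mul_nonneg hα hu0.le, mul_nonneg (mul_nonneg hα hu0.le) hu0.le]

lemma sqrt_mul_sqrt_pow_eq_exp {a b : ℝ} (ha : 0 < a) (hb : 0 < b) (n : ℕ) :
    (√a * √b) ^ n = exp (n * (log a + log b) / 2) := by
  rw [← exp_log (by positivity : 0 < (√a * √b) ^ n), log_pow,
    log_mul (by positivity) (by positivity), log_sqrt ha.le, log_sqrt hb.le]
  ring_nf

lemma A1_difference_ge {d : ℕ} (hd : 1 ≤ d) {α s β : ℝ} (hα : 0 ≤ α) (hs0 : 0 ≤ s)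
    (hs : s ≤ 1 / d) (hβ : β = 1 / d + α / d ^ 2) :
    s - (s / d) * (3 / 2 - α) - s ^ 2 / 2 - (α ^ 2 + 5 * α / 2) / d ^ 3
      ≤ (exp (-β) * (1 + β)) ^ d - (exp (-β) * (1 + β - s * β)) ^ d := by
  obtain ⟨n, rfl⟩ : ∃ n, d = n + 1 := ⟨d - 1, by omega⟩
  push_cast at hs hβ ⊢
  have hn : (0 : ℝ) ≤ n := n.cast_nonneg
  have hβ0 : 0 ≤ β := by rw [hβ]; positivity
  have hs1 : s ≤ 1 := hs.trans (div_le_one_of_le₀ (by linarith) (by positivity))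
  set a := 1 + β
  set b := 1 + β - s * β
  have hb : 0 < b := by nlinarith
  have hba : b ≤ a := by nlinarith
  have hamgm :
      (n + 1) * (s * β) * exp (n * (log a + log b) / 2) ≤ a ^ (n + 1) - b ^ (n + 1) := by
    have h := succ_mul_sub_mul_pow_le_sq_pow_sub (p := √a) (q := √b)
      (by rwa [sq_sqrt hb.le, sq_sqrt (hb.le.trans hba)]) n
    rwa [sq_sqrt hb.le, sq_sqrt (hb.le.trans hba),
      sqrt_mul_sqrt_pow_eq_exp (hb.trans_le hba) hb, show a - b = s * β by ring] at h
  have hγ : (n + 1) * β = 1 + α / (n + 1) := by rw [hβ]; field_simp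
  have hexponent := exponent_lower_bound hn hα hs0 hs hβ
  calc s - (s / (n + 1)) * (3 / 2 - α) - s ^ 2 / 2 - (α ^ 2 + 5 * α / 2) / (n + 1) ^ 3
      ≤ s * (1 + (-s / 2 - (3 / 2 - α) / (n + 1) - (α ^ 2 + 5 * α / 2) / (n + 1) ^ 2)) := by
        have hK :
            s * ((α ^ 2 + 5 * α / 2) / (n + 1) ^ 2) ≤ (α ^ 2 + 5 * α / 2) / (n + 1) ^ 3 :=
          calc s * ((α ^ 2 + 5 * α / 2) / (n + 1) ^ 2)
              ≤ 1 / (n + 1) * ((α ^ 2 + 5 * α / 2) / (n + 1) ^ 2) := by gcongr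
            _ = (α ^ 2 + 5 * α / 2) / (n + 1) ^ 3 := by field_simp
        linear_combination hK
    _ ≤ s * ((n + 1) * β * exp (-((n + 1) * β) + n * (log a + log b) / 2)) := by
        refine mul_le_mul_of_nonneg_left ?_ hs0
        rw [hγ]
        have := log_add_add_one_le_mul_exp (by positivity : 0 < 1 + α / (n + 1))
          (-(1 + α / (n + 1)) + n * (log a + log b) / 2)
        linarith
    _ = exp (-((n + 1) * β)) * ((n + 1) * (s * β) * exp (n * (log a + log b) / 2)) := by
        rw [exp_add]; ring
    _ ≤ exp (-((n + 1) * β)) * (a ^ (n + 1) - b ^ (n + 1)) := by gcongr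
    _ = (exp (-β) * a) ^ (n + 1) - (exp (-β) * b) ^ (n + 1) := by
        rw [mul_pow, mul_pow, ← mul_sub, ← exp_nat_mul, mul_neg, Nat.cast_succ]

theorem A1_difference_lower_bound_general (A : ℝ) :
    ∃ C : ℝ, 0 < C ∧ ∃ d₀ : ℕ, ∀ d : ℕ, d₀ ≤ d → ∀ α ∈ Set.Icc (0 : ℝ) A,
      ∀ s ∈ Set.Icc (0 : ℝ) (1 / (d : ℝ)),
        ∀ β : ℝ, β = 1 / (d : ℝ) + α / (d : ℝ) ^ 2 →
          s - (s / (d : ℝ)) * (3 / 2 - α) - s ^ 2 / 2 - C / (d : ℝ) ^ 3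
            ≤ (Real.exp (-β) * (1 + β)) ^ d - (Real.exp (-β) * (1 + β - s * β)) ^ d := by
  refine ⟨max (A ^ 2 + 5 * A / 2) 1, lt_max_of_lt_right one_pos, 1,
    fun d hd α hα s hs β hβ => le_trans ?_ (A1_difference_ge hd hα.1 hs.1 hs.2 hβ)⟩
  have hC : α ^ 2 + 5 * α / 2 ≤ max (A ^ 2 + 5 * A / 2) 1 :=
    le_max_of_le_left (by nlinarith [hα.1, hα.2])
  gcongr

/-- For every `A > 0` there exist `C > 0` and `d₀ ∈ ℕ` such that for all
integers `d ≥ d₀`, all `α ∈ [0, A]`, and all `s ∈ [0, 1/d]`, setting `β = 1/d + α/d²`,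
one has `(e^{−β}(1+β))^d − (e^{−β}(1 + β − s·β))^d ≥ s − (s/d)·(3/2 − α) − s²/2 − C/d³`. -/
theorem A1_difference_lower_bound (A : ℝ) (hA : 0 < A) :
    ∃ C : ℝ, 0 < C ∧ ∃ d₀ : ℕ, ∀ d : ℕ, d₀ ≤ d → ∀ α ∈ Set.Icc (0 : ℝ) A,
      ∀ s ∈ Set.Icc (0 : ℝ) (1 / (d : ℝ)),
        ∀ β : ℝ, β = 1 / (d : ℝ) + α / (d : ℝ) ^ 2 →
          s - (s / (d : ℝ)) * (3 / 2 - α) - s ^ 2 / 2 - C / (d : ℝ) ^ 3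
            ≤ (Real.exp (-β) * (1 + β)) ^ d - (Real.exp (-β) * (1 + β - s * β)) ^ d :=
  A1_difference_lower_bound_general A
end
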